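/- Let $\Bbbk$ be a field and $\nu = (\nu_1,\nu_2,\nu_3,\nu_4) \in \mathbb{N}^4$ with $\nu_1+\nu_4 \geq \nu_2+\nu_3$, and let $(r_1,r_2)$ satisfy $r_1+r_2 = \nu_2+\nu_3$, $r_1 \leq \nu_1$, $r_2 \leq \nu_4$, and suppose $\nu_1 \le \nu_2 \le \nu_3$. Then the representation $M = M(1,0,0,0)^{\oplus \nu_1 - r_1} \oplus M(0,0,0,1)^{\oplus \nu_4 - r_2} \oplus M(0,1,0,1)^{\oplus \nu_2 - r_1} \oplus M(0,0,1,1)^{\oplus \nu_3 - r_1} \oplus M(1,1,1,1)^{\oplus r_1}$ of the $2\times 2$ commutative grid has dimension vector $\nu$, and satisfies $\mathrm{rank}\begin{pmatrix} f_{12} \\ f_{13} \end{pmatrix} = r_1$ and $\mathrm{rank}\begin{pmatrix} f_{24} & -f_{34} \end{pmatrix} = r_2$. -/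

import Mathlib

/-!
The dimension vector and both ranks `r₁ = rank (f₁₂; f₁₃)`, `r₂ = rank (f₂₄, -f₃₄)` are additive
under direct sums: after regrouping coordinates, the stacked map of `A ⊕ B` has the same kernel
(for `r₁`) or the same image (for `r₂`) as the direct sum of the stacked maps of `A` and `B`.
So they can be read off the summands: only `M(1,1,1,1)` contributes to `r₁`, while `M(0,1,0,1)`,
`M(0,0,1,1)` and `M(1,1,1,1)` each contribute `1` to `r₂`, which gives
`r₂ = (ν₂ - r₁) + (ν₃ - r₁) + r₁ = ν₂ + ν₃ - r₁`.
-/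

/-- A finite-dimensional representation of the commutative `2 × 2` grid bound quiver. -/
structure GridRep (𝕜 : Type) [Field 𝕜] : Type 1 where
  V1 : Type
  V2 : Type
  V3 : Type
  V4 : Type
  [g1 : AddCommGroup V1]
  [g2 : AddCommGroup V2]
  [g3 : AddCommGroup V3]
  [g4 : AddCommGroup V4]
  [m1 : Module 𝕜 V1]
  [m2 : Module 𝕜 V2]
  [m3 : Module 𝕜 V3]
  [m4 : Module 𝕜 V4]
  [fd1 : FiniteDimensional 𝕜 V1]
  [fd2 : FiniteDimensional 𝕜 V2]
  [fd3 : FiniteDimensional 𝕜 V3]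
  [fd4 : FiniteDimensional 𝕜 V4]
  f12 : V1 →ₗ[𝕜] V2
  f13 : V1 →ₗ[𝕜] V3
  f24 : V2 →ₗ[𝕜] V4
  f34 : V3 →ₗ[𝕜] V4
  comm : f24 ∘ₗ f12 = f34 ∘ₗ f13

attribute [instance] GridRep.g1 GridRep.g2 GridRep.g3 GridRep.g4
  GridRep.m1 GridRep.m2 GridRep.m3 GridRep.m4
  GridRep.fd1 GridRep.fd2 GridRep.fd3 GridRep.fd4

variable {𝕜 : Type} [Field 𝕜]

/-- An isomorphism of grid representations. -/
structure GridIso (A B : GridRep 𝕜) : Type where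
  e1 : A.V1 ≃ₗ[𝕜] B.V1
  e2 : A.V2 ≃ₗ[𝕜] B.V2
  e3 : A.V3 ≃ₗ[𝕜] B.V3
  e4 : A.V4 ≃ₗ[𝕜] B.V4
  c12 : e2.toLinearMap ∘ₗ A.f12 = B.f12 ∘ₗ e1.toLinearMap
  c13 : e3.toLinearMap ∘ₗ A.f13 = B.f13 ∘ₗ e1.toLinearMap
  c24 : e4.toLinearMap ∘ₗ A.f24 = B.f24 ∘ₗ e2.toLinearMap
  c34 : e4.toLinearMap ∘ₗ A.f34 = B.f34 ∘ₗ e3.toLinearMap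

/-- Direct sum of two grid representations. -/
def GridRep.dsum (A B : GridRep 𝕜) : GridRep 𝕜 where
  V1 := A.V1 × B.V1
  V2 := A.V2 × B.V2
  V3 := A.V3 × B.V3
  V4 := A.V4 × B.V4
  f12 := A.f12.prodMap B.f12
  f13 := A.f13.prodMap B.f13
  f24 := A.f24.prodMap B.f24
  f34 := A.f34.prodMap B.f34
  comm := by
    apply LinearMap.ext
    intro x
    have hA := LinearMap.congr_fun A.comm x.1
    have hB := LinearMap.congr_fun B.comm x.2
    simp only [LinearMap.comp_apply, LinearMap.prodMap_apply] at *
    exact Prod.ext hA hB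

/-- The zero representation predicate. -/
def GridRep.IsZero (A : GridRep 𝕜) : Prop :=
  Subsingleton A.V1 ∧ Subsingleton A.V2 ∧ Subsingleton A.V3 ∧ Subsingleton A.V4

/-- Indecomposability of a grid representation. -/
def GridRep.Indec (R : GridRep 𝕜) : Prop :=
  ¬ R.IsZero ∧ ∀ A B : GridRep 𝕜, Nonempty (GridIso R (A.dsum B)) → A.IsZero ∨ B.IsZero

/-- The "identity where possible" linear map `𝕜^a → 𝕜^b`. -/
def indMap (𝕜 : Type) [Field 𝕜] (a b : ℕ) : (Fin a → 𝕜) →ₗ[𝕜] (Fin b → 𝕜) where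
  toFun v := fun i => if h : (i : ℕ) < a then v ⟨i, h⟩ else 0
  map_add' u v := by funext i; by_cases h : (i : ℕ) < a <;> simp [h]
  map_smul' c v := by funext i; by_cases h : (i : ℕ) < a <;> simp [h]

@[simp] lemma indMap_apply (a b : ℕ) (v : Fin a → 𝕜) (i : Fin b) :
    indMap 𝕜 a b v i = if h : (i : ℕ) < a then v ⟨i, h⟩ else 0 := rfl

/-- The indicator representation `M(a,b,c,d)` (dimensions in `{0,1}` in practice), with
identity maps where possible and zero maps otherwise. -/
def M (𝕜 : Type) [Field 𝕜] (a b c d : ℕ)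
    (h : ∀ x : ℕ, x < a → x < d → (x < b ↔ x < c)) : GridRep 𝕜 where
  V1 := Fin a → 𝕜
  V2 := Fin b → 𝕜
  V3 := Fin c → 𝕜
  V4 := Fin d → 𝕜
  f12 := indMap 𝕜 a b
  f13 := indMap 𝕜 a c
  f24 := indMap 𝕜 b d
  f34 := indMap 𝕜 c d
  comm := by
    refine LinearMap.ext fun v => funext fun i => ?_
    have hd := i.isLt
    simp only [LinearMap.comp_apply, indMap_apply]
    by_cases ha : (i : ℕ) < a
    · have hbc := h i ha hd
      by_cases hb : (i : ℕ) < b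
      · have hc : (i : ℕ) < c := hbc.mp hb
        rw [dif_pos hb, dif_pos hc]
      · have hc : ¬ (i : ℕ) < c := fun hc' => hb (hbc.mpr hc')
        rw [dif_neg hb, dif_neg hc]
    · by_cases hb : (i : ℕ) < b <;> by_cases hc : (i : ℕ) < c <;>
        simp [hb, hc, ha]

/-- The `n`-fold direct sum (direct power) of a grid representation. -/
def GridRep.pow (R : GridRep 𝕜) (n : ℕ) : GridRep 𝕜 where
  V1 := Fin n → R.V1
  V2 := Fin n → R.V2
  V3 := Fin n → R.V3
  V4 := Fin n → R.V4
  f12 := R.f12.compLeft (Fin n)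
  f13 := R.f13.compLeft (Fin n)
  f24 := R.f24.compLeft (Fin n)
  f34 := R.f34.compLeft (Fin n)
  comm := by
    refine LinearMap.ext fun v => funext fun i => ?_
    have := LinearMap.congr_fun R.comm (v i)
    simpa using this


namespace LinearMap

section Semiring

variable {R : Type*} [Semiring R] {U U' V V' W W' : Type*}
  [AddCommMonoid U] [AddCommMonoid U'] [AddCommMonoid V] [AddCommMonoid V']
  [AddCommMonoid W] [AddCommMonoid W']
  [Module R U] [Module R U'] [Module R V] [Module R V'] [Module R W] [Module R W']

theorem ker_prod_prodMap (f : U →ₗ[R] V) (g : U' →ₗ[R] V') (f' : U →ₗ[R] W) (g' : U' →ₗ[R] W') :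
    ker ((f.prodMap g).prod (f'.prodMap g')) = ker ((f.prod f').prodMap (g.prod g')) := by
  ext x
  simp only [mem_ker, prod_apply, prodMap_apply, Prod.ext_iff, Prod.fst_zero, Prod.snd_zero]
  tauto

theorem ker_prod_compLeft (f : U →ₗ[R] V) (f' : U →ₗ[R] W) (ι : Type*) :
    ker ((f.compLeft ι).prod (f'.compLeft ι)) = ker ((f.prod f').compLeft ι) := by
  ext x
  simp only [mem_ker, prod_apply, Prod.ext_iff, funext_iff, compLeft_apply, Function.comp_apply,
    Prod.fst_zero, Prod.snd_zero, Pi.zero_apply]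
  exact forall_and.symm

theorem coprod_prodMap (f : V →ₗ[R] U) (g : V' →ₗ[R] U') (f' : W →ₗ[R] U) (g' : W' →ₗ[R] U') :
    (f.prodMap g).coprod (f'.prodMap g') =
      (f.coprod f').prodMap (g.coprod g') ∘ₗ
        (LinearEquiv.prodProdProdComm R V V' W W').toLinearMap :=
  rfl

theorem range_coprod_prodMap (f : V →ₗ[R] U) (g : V' →ₗ[R] U') (f' : W →ₗ[R] U)
    (g' : W' →ₗ[R] U') :
    range ((f.prodMap g).coprod (f'.prodMap g')) = range ((f.coprod f').prodMap (g.coprod g')) := by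
  rw [coprod_prodMap, range_comp_of_range_eq_top _ (LinearEquiv.range _)]

theorem range_coprod_compLeft (f : V →ₗ[R] U) (f' : W →ₗ[R] U) (ι : Type*) :
    range ((f.compLeft ι).coprod (f'.compLeft ι)) = range ((f.coprod f').compLeft ι) := by
  apply le_antisymm
  · rintro _ ⟨⟨v, w⟩, rfl⟩
    exact ⟨fun i => (v i, w i), rfl⟩
  · rintro _ ⟨x, rfl⟩
    exact ⟨(fun i => (x i).1, fun i => (x i).2), rfl⟩

end Semiring

section Ring

variable {R U V W : Type*} [Ring R] [AddCommGroup U] [AddCommGroup V] [AddCommGroup W]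
  [Module R U] [Module R V] [Module R W]

theorem finrank_range_eq_of_ker_eq {f : U →ₗ[R] V} {g : U →ₗ[R] W} (h : ker f = ker g) :
    Module.finrank R (range f) = Module.finrank R (range g) :=
  (f.quotKerEquivRange.symm.trans
    ((Submodule.quotEquivOfEq _ _ h).trans g.quotKerEquivRange)).finrank_eq

end Ring

section DivisionRing

variable {K : Type*} [DivisionRing K] {U U' V V' : Type*}
  [AddCommGroup U] [AddCommGroup U'] [AddCommGroup V] [AddCommGroup V']
  [Module K U] [Module K U'] [Module K V] [Module K V']

theorem finrank_range_prodMap [FiniteDimensional K V] [FiniteDimensional K V']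
    (f : U →ₗ[K] V) (g : U' →ₗ[K] V') :
    Module.finrank K (range (f.prodMap g)) =
      Module.finrank K (range f) + Module.finrank K (range g) := by
  have hrange : range (f.prodMap g) = range ((range f).subtype.prodMap (range g).subtype) := by
    rw [range_prodMap, range_prodMap, Submodule.range_subtype, Submodule.range_subtype]
  rw [hrange, finrank_range_of_inj, Module.finrank_prod]
  exact Subtype.val_injective.prodMap Subtype.val_injective

theorem finrank_range_compLeft [FiniteDimensional K V] (f : U →ₗ[K] V) (ι : Type*) [Fintype ι] :
    Module.finrank K (range (f.compLeft ι)) = Fintype.card ι * Module.finrank K (range f) := by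
  have hrange : range (f.compLeft ι) = range ((range f).subtype.compLeft ι) := by
    rw [range_compLeft, range_compLeft, Submodule.range_subtype]
  rw [hrange, finrank_range_of_inj, Module.finrank_pi_fintype]
  · simp
  · exact fun x y h => funext fun i => Subtype.val_injective (congrFun h i)

end DivisionRing

end LinearMap

theorem indMap_self (a : ℕ) : indMap 𝕜 a a = LinearMap.id :=
  LinearMap.ext fun v => funext fun i => by simp

namespace GridRep

noncomputable def dimVec (R : GridRep 𝕜) : ℕ × ℕ × ℕ × ℕ :=
  (Module.finrank 𝕜 R.V1, Module.finrank 𝕜 R.V2, Module.finrank 𝕜 R.V3, Module.finrank 𝕜 R.V4)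

noncomputable def rank₁ (R : GridRep 𝕜) : ℕ :=
  Module.finrank 𝕜 (LinearMap.range (R.f12.prod R.f13))

noncomputable def rank₂ (R : GridRep 𝕜) : ℕ :=
  Module.finrank 𝕜 (LinearMap.range (R.f24.coprod (-R.f34)))

variable (A B R : GridRep 𝕜) (n : ℕ)

@[simp] theorem dimVec_dsum : (A.dsum B).dimVec = A.dimVec + B.dimVec := by
  simp only [dimVec, Prod.mk_add_mk]
  exact congr_arg₂ _ Module.finrank_prod <| congr_arg₂ _ Module.finrank_prod <|
    congr_arg₂ _ Module.finrank_prod Module.finrank_prod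

@[simp] theorem dimVec_pow : (R.pow n).dimVec = n • R.dimVec := by
  have hpow (V : Type) [AddCommGroup V] [Module 𝕜 V] [FiniteDimensional 𝕜 V] :
      Module.finrank 𝕜 (Fin n → V) = n * Module.finrank 𝕜 V := by
    simp [Module.finrank_pi_fintype]
  simp only [dimVec, Prod.smul_mk, smul_eq_mul]
  exact congr_arg₂ _ (hpow _) <| congr_arg₂ _ (hpow _) <| congr_arg₂ _ (hpow _) (hpow _)

@[simp] theorem rank₁_dsum : (A.dsum B).rank₁ = A.rank₁ + B.rank₁ := by
  change Module.finrank 𝕜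
    (LinearMap.range ((A.f12.prodMap B.f12).prod (A.f13.prodMap B.f13))) = _
  rw [LinearMap.finrank_range_eq_of_ker_eq (LinearMap.ker_prod_prodMap _ _ _ _),
    LinearMap.finrank_range_prodMap, rank₁, rank₁]

@[simp] theorem rank₁_pow : (R.pow n).rank₁ = n * R.rank₁ := by
  change Module.finrank 𝕜
    (LinearMap.range ((R.f12.compLeft (Fin n)).prod (R.f13.compLeft (Fin n)))) = _
  rw [LinearMap.finrank_range_eq_of_ker_eq (LinearMap.ker_prod_compLeft _ _ _),
    LinearMap.finrank_range_compLeft, Fintype.card_fin, rank₁]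

@[simp] theorem rank₂_dsum : (A.dsum B).rank₂ = A.rank₂ + B.rank₂ := by
  change Module.finrank 𝕜
    (LinearMap.range ((A.f24.prodMap B.f24).coprod ((-A.f34).prodMap (-B.f34)))) = _
  rw [LinearMap.range_coprod_prodMap, LinearMap.finrank_range_prodMap, rank₂, rank₂]

@[simp] theorem rank₂_pow : (R.pow n).rank₂ = n * R.rank₂ := by
  change Module.finrank 𝕜
    (LinearMap.range ((R.f24.compLeft (Fin n)).coprod ((-R.f34).compLeft (Fin n)))) = _
  rw [LinearMap.range_coprod_compLeft, LinearMap.finrank_range_compLeft, Fintype.card_fin, rank₂]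

section M

variable {a b c d : ℕ}

@[simp] theorem dimVec_M {h : ∀ x : ℕ, x < a → x < d → (x < b ↔ x < c)} :
    (M 𝕜 a b c d h).dimVec = (a, b, c, d) := by
  change (Module.finrank 𝕜 (Fin a → 𝕜), Module.finrank 𝕜 (Fin b → 𝕜),
    Module.finrank 𝕜 (Fin c → 𝕜), Module.finrank 𝕜 (Fin d → 𝕜)) = _
  simp only [Module.finrank_fin_fun]

@[simp] theorem rank₁_M_zero_source {h : ∀ x : ℕ, x < 0 → x < d → (x < b ↔ x < c)} :
    (M 𝕜 0 b c d h).rank₁ = 0 :=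
  Nat.le_zero.mp <| (LinearMap.finrank_range_le _).trans_eq (Module.finrank_fin_fun 𝕜)

@[simp] theorem rank₁_M_zero_targets {h : ∀ x : ℕ, x < a → x < d → (x < 0 ↔ x < 0)} :
    (M 𝕜 a 0 0 d h).rank₁ = 0 :=
  Nat.le_zero.mp <| (Submodule.finrank_le _).trans_eq
    (Module.finrank_zero_of_subsingleton (M := (Fin 0 → 𝕜) × (Fin 0 → 𝕜)))

@[simp] theorem rank₁_M_of_f12_id {h : ∀ x : ℕ, x < a → x < d → (x < a ↔ x < c)} :
    (M 𝕜 a a c d h).rank₁ = a := by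
  refine (LinearMap.finrank_range_of_inj fun v w hvw => ?_).trans (Module.finrank_fin_fun 𝕜)
  have hfst : indMap 𝕜 a a v = indMap 𝕜 a a w := congrArg Prod.fst hvw
  rwa [indMap_self] at hfst

@[simp] theorem rank₂_M_zero_sources {h : ∀ x : ℕ, x < a → x < d → (x < 0 ↔ x < 0)} :
    (M 𝕜 a 0 0 d h).rank₂ = 0 :=
  Nat.le_zero.mp <| (LinearMap.finrank_range_le _).trans_eq
    (Module.finrank_zero_of_subsingleton (M := (Fin 0 → 𝕜) × (Fin 0 → 𝕜)))

@[simp] theorem rank₂_M_of_f24_id {h : ∀ x : ℕ, x < a → x < d → (x < d ↔ x < c)} :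
    (M 𝕜 a d c d h).rank₂ = d := by
  have htop : LinearMap.range ((M 𝕜 a d c d h).f24.coprod (-(M 𝕜 a d c d h).f34)) = ⊤ :=
    LinearMap.range_eq_top.mpr fun (y : Fin d → 𝕜) =>
      ⟨(y, 0), show indMap 𝕜 d d y + -indMap 𝕜 c d 0 = y by simp [indMap_self]⟩
  rw [rank₂, htop, finrank_top]
  exact Module.finrank_fin_fun 𝕜

@[simp] theorem rank₂_M_of_f34_id {h : ∀ x : ℕ, x < a → x < d → (x < b ↔ x < d)} :
    (M 𝕜 a b d d h).rank₂ = d := by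
  have htop : LinearMap.range ((M 𝕜 a b d d h).f24.coprod (-(M 𝕜 a b d d h).f34)) = ⊤ :=
    LinearMap.range_eq_top.mpr fun (y : Fin d → 𝕜) =>
      ⟨(0, -y), show indMap 𝕜 b d 0 + -indMap 𝕜 d d (-y) = y by simp [indMap_self]⟩
  rw [rank₂, htop, finrank_top]
  exact Module.finrank_fin_fun 𝕜

end M

end GridRep

/-- In the regime `ν₁ + ν₄ ≥ ν₂ + ν₃`, `ν₁ ≤ ν₂ ≤ ν₃`, for an admissible rank pair
`(r₁, r₂)`, the representation
`M(1,0,0,0)^{ν₁-r₁} ⊕ M(0,0,0,1)^{ν₄-r₂} ⊕ M(0,1,0,1)^{ν₂-r₁} ⊕ M(0,0,1,1)^{ν₃-r₁} ⊕ M(1,1,1,1)^{r₁}`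
has dimension vector `ν` and satisfies `rank (f₁₂; f₁₃) = r₁`, `rank (f₂₄, -f₃₄) = r₂`. -/
theorem stmt15 (𝕜 : Type) [Field 𝕜] (ν₁ ν₂ ν₃ ν₄ r₁ r₂ : ℕ)
    (hsum : r₁ + r₂ = ν₂ + ν₃)
    (hr₁ : r₁ ≤ ν₁) (hr₂ : r₂ ≤ ν₄) (h12 : ν₁ ≤ ν₂) (h23 : ν₂ ≤ ν₃) :
    ∀ R : GridRep 𝕜,
      R = ((M 𝕜 1 0 0 0 (by intro x hx hd; omega)).pow (ν₁ - r₁)).dsum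
        (((M 𝕜 0 0 0 1 (by intro x hx hd; omega)).pow (ν₄ - r₂)).dsum
          (((M 𝕜 0 1 0 1 (by intro x hx hd; omega)).pow (ν₂ - r₁)).dsum
            (((M 𝕜 0 0 1 1 (by intro x hx hd; omega)).pow (ν₃ - r₁)).dsum
              ((M 𝕜 1 1 1 1 (by intro x hx hd; omega)).pow r₁)))) →
      (Module.finrank 𝕜 R.V1 = ν₁ ∧ Module.finrank 𝕜 R.V2 = ν₂ ∧
        Module.finrank 𝕜 R.V3 = ν₃ ∧ Module.finrank 𝕜 R.V4 = ν₄) ∧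
      Module.finrank 𝕜 (LinearMap.range (LinearMap.prod R.f12 R.f13)) = r₁ ∧
      Module.finrank 𝕜 (LinearMap.range (LinearMap.coprod R.f24 (-R.f34))) = r₂ := by
  intro R hR
  have hdim : R.dimVec = (ν₁, ν₂, ν₃, ν₄) := by
    simp only [hR, GridRep.dimVec_dsum, GridRep.dimVec_pow, GridRep.dimVec_M, Prod.smul_mk,
      smul_eq_mul, Prod.mk_add_mk, Prod.mk.injEq]
    omega
  have hrank₁ : R.rank₁ = r₁ := by
    simp only [hR, GridRep.rank₁_dsum, GridRep.rank₁_pow, GridRep.rank₁_M_zero_source,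
      GridRep.rank₁_M_zero_targets, GridRep.rank₁_M_of_f12_id]
    omega
  have hrank₂ : R.rank₂ = r₂ := by
    simp only [hR, GridRep.rank₂_dsum, GridRep.rank₂_pow, GridRep.rank₂_M_zero_sources,
      GridRep.rank₂_M_of_f24_id, GridRep.rank₂_M_of_f34_id]
    omega
  exact ⟨by simpa only [GridRep.dimVec, Prod.mk.injEq] using hdim, hrank₁, hrank₂⟩
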